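/- Suppose μ is absolutely continuous with density w (i.e., μ(dt) = w(t)dt on [0,1]). Suppose Λ, Γ : [0,1] → ℝ are absolutely continuous, c > 0, d, ρ ∈ ℝ, and (Λ, Γ, c, d, ρ) solves the ODE system: for a.e. p ∈ [0,1], min{ max{ Γ'(p) − h(p), Λ(p) }, Γ'(p) } = 0 and Λ'(p) = 2σ(q(p) − Γ(p)) + ρ − c·u'(d − Γ(p))·w(1−p), together with Λ(0) = 1 − θ, Λ(1) = 0, Γ(0) = 0, ol(Γ) = d, and ρ = θ + 2σ∫₀¹ Γ(t)dt − 2σ∫₀¹ q(t)dt. Then Ψ(p) := 2σ∫₀ᵖ (q(t) − Γ(t))dt + ρp + 1 − θ belongs to C²⁻([0,1]), satisfies Ψ(0) = 1 − θ, Ψ(1) = 1 and the OIDE min{ max{ −Ψ''(p), Ψ(p) − Φ_c[Ψ'](p) }, 2σh(p) − Ψ''(p) } = 0 for a.e. p ∈ [0,1]; moreover Γ belongs to 𝒢 and satisfies J(Γ) = sup_{G ∈ 𝒢} J(G). -/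

import Mathlib

open MeasureTheory Set

/-- The mean-variance operator `ol` from the paper. -/
noncomputable def ol (σ θ k : ℝ) (q f : ℝ → ℝ) : ℝ :=
  σ * (∫ t in (0:ℝ)..1, f t) ^ 2 - σ * (∫ t in (0:ℝ)..1, (f t) ^ 2)
    + 2 * σ * (∫ t in (0:ℝ)..1, q t * f t)
    + (θ - 2 * σ * (∫ t in (0:ℝ)..1, q t)) * (∫ t in (0:ℝ)..1, f t) + k

/-- Membership in the admissible class `𝒢`: `G(p) = ∫₀ᵖ g(t)dt` on `[0,1]`
for some measurable `g` with `0 ≤ g ≤ h` a.e. on `[0,1]`. -/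
def InG (h G : ℝ → ℝ) : Prop :=
  ∃ g : ℝ → ℝ, Measurable g ∧
    (∀ᵐ t ∂(volume.restrict (Icc (0:ℝ) 1)), 0 ≤ g t ∧ g t ≤ h t) ∧
    ∀ p ∈ Icc (0:ℝ) 1, G p = ∫ t in (0:ℝ)..p, g t

/-- The objective `J(G) = ∫_{[0,1]} u(ol(G) − G(1−p)) μ(dp)`. -/
noncomputable def J (σ θ k : ℝ) (q u : ℝ → ℝ) (μ : Measure ℝ) (G : ℝ → ℝ) : ℝ :=
  ∫ p in Icc (0:ℝ) 1, u (ol σ θ k q G - G (1 - p)) ∂μ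

/-- The distribution function `Φ(p)` built from an optimal candidate `G`. -/
noncomputable def Phi (σ θ k : ℝ) (q u : ℝ → ℝ) (μ : Measure ℝ) (G : ℝ → ℝ) (p : ℝ) : ℝ :=
  (∫ t in Ioc (1 - p) 1, deriv u (ol σ θ k q G - G (1 - t)) ∂μ) /
  (∫ t in Icc (0:ℝ) 1, deriv u (ol σ θ k q G - G (1 - t)) ∂μ)

/-- The function `Ψ` built from an optimal candidate `G`. -/
noncomputable def PsiOf (σ θ : ℝ) (q G : ℝ → ℝ) (p : ℝ) : ℝ :=
  (2 * σ * (∫ t in (0:ℝ)..1, G t) + θ - 2 * σ * (∫ t in (0:ℝ)..1, q t)) * (p - 1)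
    + 2 * σ * (∫ t in p..(1:ℝ), (G t - q t)) + 1

/-- The nonlocal operator `Φ_c[f](p)`. -/
noncomputable def PhiC (σ θ k : ℝ) (q u : ℝ → ℝ) (μ : Measure ℝ) (f : ℝ → ℝ) : ℝ → ℝ :=
  Phi σ θ k q u μ (fun s => q s + (f 0 - f s) / (2 * σ))

/-- `Ψ ∈ C²⁻([0,1])` with first derivative `Ψd` and a.e. second derivative `Ψdd`:
`Ψ` is differentiable on `[0,1]` with derivative `Ψd`, and `Ψd` is absolutely
continuous on `[0,1]` with a.e. derivative `Ψdd`. -/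
def C2m (Ψ Ψd Ψdd : ℝ → ℝ) : Prop :=
  (∀ p ∈ Icc (0:ℝ) 1, HasDerivWithinAt Ψ (Ψd p) (Icc (0:ℝ) 1) p) ∧
  IntegrableOn Ψdd (Icc (0:ℝ) 1) ∧
  (∀ p ∈ Icc (0:ℝ) 1, Ψd p = Ψd 0 + ∫ t in (0:ℝ)..p, Ψdd t)

/-- The ODE system (4.16) of the paper: `Λ, Γ` absolutely continuous on `[0,1]`
with a.e. derivatives `Λd, Γd`, satisfying the double-obstacle ODE, the ODE for `Λ`,
and the boundary/consistency conditions. -/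
def ODESys (σ θ k : ℝ) (q h u w : ℝ → ℝ) (Λ Γ Λd Γd : ℝ → ℝ) (c d ρ : ℝ) : Prop :=
  IntegrableOn Λd (Icc (0:ℝ) 1) ∧ IntegrableOn Γd (Icc (0:ℝ) 1) ∧
  (∀ p ∈ Icc (0:ℝ) 1, Λ p = Λ 0 + ∫ t in (0:ℝ)..p, Λd t) ∧
  (∀ p ∈ Icc (0:ℝ) 1, Γ p = Γ 0 + ∫ t in (0:ℝ)..p, Γd t) ∧
  (∀ᵐ p ∂(volume.restrict (Icc (0:ℝ) 1)),
    min (max (Γd p - h p) (Λ p)) (Γd p) = 0 ∧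
    Λd p = 2 * σ * (q p - Γ p) + ρ - c * deriv u (d - Γ p) * w (1 - p)) ∧
  Λ 0 = 1 - θ ∧ Λ 1 = 0 ∧ Γ 0 = 0 ∧ ol σ θ k q Γ = d ∧
  ρ = θ + 2 * σ * (∫ t in (0:ℝ)..1, Γ t) - 2 * σ * (∫ t in (0:ℝ)..1, q t)

lemma aux_minmax {σ a b L : ℝ} (hσ : 0 < σ) (hmin : min (max a L) b = 0) :
    min (max (2*σ*a) L) (2*σ*b) = 0 := by
  have h2σ : 0 < 2*σ := by linarith
  rcases le_total (max a L) b with hab | hab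
  · rw [min_eq_left hab] at hmin
    have hb : 0 ≤ b := hmin ▸ hab
    have ha : a ≤ 0 := hmin ▸ le_max_left a L
    have hL : L ≤ 0 := hmin ▸ le_max_right a L
    have hmax : max (2*σ*a) L = 0 := by
      rcases max_cases a L with ⟨h1, _⟩ | ⟨h1, h2⟩
      · have ha0 : a = 0 := by rw [h1] at hmin; exact hmin
        rw [ha0, mul_zero, max_eq_left hL]
      · have hL0 : L = 0 := by rw [h1] at hmin; exact hmin
        rw [hL0, max_eq_right (by nlinarith)]
    rw [hmax, min_eq_left (by nlinarith)]
  · rw [min_eq_right hab] at hmin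
    subst hmin
    rw [mul_zero, min_eq_right]
    rcases le_total a L with h | h
    · exact le_trans (le_trans hab (max_eq_right h).le) (le_max_right _ _)
    · have : 0 ≤ a := le_trans hab (max_eq_left h).le
      exact le_trans (by nlinarith : (0:ℝ) ≤ 2*σ*a) (le_max_left _ _)

lemma aux_bounds {a b L : ℝ} (hb : 0 ≤ b) (hmin : min (max (a - b) L) a = 0) :
    0 ≤ a ∧ a ≤ b := by
  have ha : 0 ≤ a := hmin ▸ min_le_right _ _
  refine ⟨ha, ?_⟩
  by_contra hab
  push_neg at hab
  have h1 : 0 < a - b := by linarith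
  rcases le_total (max (a - b) L) a with h | h
  · rw [min_eq_left h] at hmin
    have := hmin ▸ le_max_left (a - b) L
    linarith
  · rw [min_eq_right h] at hmin
    linarith

lemma aux_sign {a b g L : ℝ} (hb : 0 ≤ b) (hg0 : 0 ≤ g) (hgb : g ≤ b)
    (hmin : min (max (a - b) L) a = 0) : 0 ≤ L * (g - a) := by
  rcases lt_trichotomy L 0 with hL | hL | hL
  · rcases le_total (max (a - b) L) a with h | h
    · rw [min_eq_left h] at hmin
      rcases max_cases (a - b) L with ⟨h1, _⟩ | ⟨h1, _⟩
      · have : a - b = 0 := by rw [h1] at hmin; exact hmin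
        have : a = b := by linarith
        nlinarith
      · have : L = 0 := by rw [h1] at hmin; exact hmin
        linarith
    · rw [min_eq_right h] at hmin
      subst hmin
      have hmax : (0:ℝ) ≤ max (0 - b) L := by simpa using h
      rcases le_total (0 - b) L with h2 | h2
      · rw [max_eq_right h2] at hmax; linarith
      · rw [max_eq_left h2] at hmax
        have hb0 : b = 0 := le_antisymm (by linarith) hb
        have : g = 0 := le_antisymm (hb0 ▸ hgb) hg0
        simp [this]
  · simp [hL]
  · have ha : a = 0 := by
      have h1 : 0 < max (a - b) L := lt_of_lt_of_le hL (le_max_right _ _)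
      rcases le_total (max (a - b) L) a with h | h
      · rw [min_eq_left h] at hmin; linarith
      · rw [min_eq_right h] at hmin; exact hmin
    subst ha
    have : 0 ≤ g - 0 := by linarith
    positivity

lemma concave_tangent {u : ℝ → ℝ} (hc : ConcaveOn ℝ univ u) (hd : Differentiable ℝ u)
    (x y : ℝ) : u y ≤ u x + deriv u x * (y - x) := by
  rcases lt_trichotomy x y with hxy | rfl | hxy
  · have := hc.slope_le_deriv (mem_univ x) (mem_univ y) hxy (hd x)
    rw [slope_def_field] at this
    rw [div_le_iff₀ (by linarith)] at this
    nlinarith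
  · simp
  · have := hc.deriv_le_slope (mem_univ y) (mem_univ x) hxy (hd x)
    rw [slope_def_field, le_div_iff₀ (by linarith)] at this
    nlinarith


set_option maxHeartbeats 1600000 in
theorem stmt_14 (σ θ k : ℝ) (hσ : 0 < σ) (hθ : 0 ≤ θ)
    (q h : ℝ → ℝ)
    (hh_int : IntegrableOn h (Icc (0:ℝ) 1))
    (hh_nonneg : ∀ᵐ t ∂(volume.restrict (Icc (0:ℝ) 1)), 0 ≤ h t)
    (hq : ∀ p ∈ Icc (0:ℝ) 1, q p = ∫ t in (0:ℝ)..p, h t)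
    (m₀ : ℝ) (hm₀ : m₀ ∈ Ico (0:ℝ) 1)
    (hq0 : ∀ p ∈ Icc (0:ℝ) m₀, q p = 0)
    (hhpos : ∀ᵐ t ∂(volume.restrict (Ioo m₀ 1)), 0 < h t)
    (u : ℝ → ℝ) (hu_conc : ConcaveOn ℝ univ u) (hu_mono : StrictMono u)
    (hu_diff : Differentiable ℝ u)
    (μ : Measure ℝ) [IsProbabilityMeasure μ] (hμ0 : μ {0} = 0)
    (hμsupp : μ (Icc (0:ℝ) 1)ᶜ = 0)
    (w : ℝ → ℝ) (hw_meas : Measurable w)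
    (hw_nonneg : ∀ᵐ t ∂(volume.restrict (Icc (0:ℝ) 1)), 0 ≤ w t)
    (hμw : μ = (volume.restrict (Icc (0:ℝ) 1)).withDensity (fun t => ENNReal.ofReal (w t)))
    (Λ Γ Λd Γd : ℝ → ℝ) (c d ρ : ℝ) (hc : 0 < c)
    (hsys : ODESys σ θ k q h u w Λ Γ Λd Γd c d ρ)
    (Ψ : ℝ → ℝ)
    (hΨ : Ψ = fun p => 2 * σ * (∫ t in (0:ℝ)..p, (q t - Γ t)) + ρ * p + 1 - θ) :
    (∃ Ψd Ψdd : ℝ → ℝ, C2m Ψ Ψd Ψdd ∧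
      Ψ 0 = 1 - θ ∧ Ψ 1 = 1 ∧
      ∀ᵐ p ∂(volume.restrict (Icc (0:ℝ) 1)),
        min (max (-(Ψdd p)) (Ψ p - PhiC σ θ k q u μ Ψd p)) (2 * σ * h p - Ψdd p) = 0) ∧
    InG h Γ ∧ ∀ G : ℝ → ℝ, InG h G → J σ θ k q u μ G ≤ J σ θ k q u μ Γ := by
  obtain ⟨hΛd_int, hΓd_int, hΛrep, hΓrep, hae, hΛ0, hΛ1, hΓ0, hold, hρ⟩ := hsys
  have h01 : (0:ℝ) ≤ 1 := zero_le_one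
  have hp1 : (1:ℝ) ∈ Icc (0:ℝ) 1 := ⟨h01, le_rfl⟩
  have hp0 : (0:ℝ) ∈ Icc (0:ℝ) 1 := ⟨le_rfl, h01⟩
  have huIcc : uIcc (0:ℝ) 1 = Icc 0 1 := uIcc_of_le h01
  have hIoc_sub : ∀ {p : ℝ}, p ∈ Icc (0:ℝ) 1 → Ioc (0:ℝ) p ⊆ Icc 0 1 :=
    fun {p} hp x hx => ⟨hx.1.le, hx.2.trans hp.2⟩
  have hII : ∀ (f : ℝ → ℝ), IntegrableOn f (Icc (0:ℝ) 1) → ∀ p ∈ Icc (0:ℝ) 1,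
      IntervalIntegrable f volume 0 p := by
    intro f hf p hp
    rw [intervalIntegrable_iff_integrableOn_Ioc_of_le hp.1]
    exact hf.mono_set (hIoc_sub hp)
  -- continuity of q, Γ, Λ
  have hqC : ContinuousOn q (Icc (0:ℝ) 1) := by
    have h1 : ContinuousOn (fun x => ∫ t in (0:ℝ)..x, h t) (Icc 0 1) := by
      have := intervalIntegral.continuousOn_primitive_interval (a := 0) (b := 1)
        (μ := volume) (f := h) (by rwa [huIcc])
      rwa [huIcc] at this
    exact h1.congr hq
  have hΓC : ContinuousOn Γ (Icc (0:ℝ) 1) := by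
    have h1 : ContinuousOn (fun x => Γ 0 + ∫ t in (0:ℝ)..x, Γd t) (Icc 0 1) := by
      have := intervalIntegral.continuousOn_primitive_interval (a := 0) (b := 1)
        (μ := volume) (f := Γd) (by rwa [huIcc])
      exact continuousOn_const.add (by rwa [huIcc] at this)
    exact h1.congr hΓrep
  have hΛC : ContinuousOn Λ (Icc (0:ℝ) 1) := by
    have h1 : ContinuousOn (fun x => Λ 0 + ∫ t in (0:ℝ)..x, Λd t) (Icc 0 1) := by
      have := intervalIntegral.continuousOn_primitive_interval (a := 0) (b := 1)
        (μ := volume) (f := Λd) (by rwa [huIcc])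
      exact continuousOn_const.add (by rwa [huIcc] at this)
    exact h1.congr hΛrep
  have hq00 : q 0 = 0 := by simpa using hq 0 hp0
  have hqΓC : ContinuousOn (fun t => q t - Γ t) (Icc (0:ℝ) 1) := hqC.sub hΓC
  -- the first derivative function
  set Ψdf : ℝ → ℝ := fun p => 2*σ*(q p - Γ p) + ρ with hΨdf
  have hΨdC : ContinuousOn Ψdf (Icc (0:ℝ) 1) :=
    (continuousOn_const.mul hqΓC).add continuousOn_const
  have hΨd0 : Ψdf 0 = ρ := by rw [hΨdf]; simp [hq00, hΓ0]
  -- derivative of Ψ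
  have hΨderiv : ∀ p ∈ Icc (0:ℝ) 1, HasDerivWithinAt Ψ (Ψdf p) (Icc (0:ℝ) 1) p := by
    intro p hp
    haveI : Fact (p ∈ Icc (0:ℝ) 1) := ⟨hp⟩
    have hint : IntervalIntegrable (fun t => q t - Γ t) volume 0 p :=
      hII _ hqΓC.integrableOn_Icc p hp
    have h1 : HasDerivWithinAt (fun x => ∫ t in (0:ℝ)..x, (q t - Γ t))
        (q p - Γ p) (Icc (0:ℝ) 1) p :=
      intervalIntegral.integral_hasDerivWithinAt_right hint
        (hqΓC.stronglyMeasurableAtFilter_nhdsWithin measurableSet_Icc p)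
        (hqΓC p hp)
    rw [hΨ]
    have h2 := (((h1.const_mul (2*σ)).add
      (((hasDerivWithinAt_id p (Icc (0:ℝ) 1)).const_mul ρ))).add_const 1).sub_const θ
    refine HasDerivWithinAt.congr_deriv h2 ?_
    rw [hΨdf]; ring
  -- the second derivative function
  set Ψddf : ℝ → ℝ := fun p => 2*σ*(h p - Γd p) with hΨddf
  have hΨdd_int : IntegrableOn Ψddf (Icc (0:ℝ) 1) := (hh_int.sub hΓd_int).const_mul (2*σ)
  have hΓint : ∀ p ∈ Icc (0:ℝ) 1, ∫ t in (0:ℝ)..p, Γd t = Γ p := by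
    intro p hp
    have := hΓrep p hp
    rw [hΓ0] at this
    linarith
  have hΨdd_rep : ∀ p ∈ Icc (0:ℝ) 1, Ψdf p = Ψdf 0 + ∫ t in (0:ℝ)..p, Ψddf t := by
    intro p hp
    have e1 : ∫ t in (0:ℝ)..p, Ψddf t = 2*σ*(q p - Γ p) := by
      rw [hΨddf]
      simp only []
      rw [intervalIntegral.integral_const_mul,
        intervalIntegral.integral_sub (hII h hh_int p hp) (hII Γd hΓd_int p hp),
        ← hq p hp, hΓint p hp]
    rw [e1, hΨd0, hΨdf]; ring
  -- boundary values of Ψ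
  have hΨ0 : Ψ 0 = 1 - θ := by rw [hΨ]; simp
  have hqI : IntegrableOn q (Icc (0:ℝ) 1) := hqC.integrableOn_Icc
  have hΓI : IntegrableOn Γ (Icc (0:ℝ) 1) := hΓC.integrableOn_Icc
  have hΨ1 : Ψ 1 = 1 := by
    rw [hΨ]
    simp only []
    rw [intervalIntegral.integral_sub (hII q hqI 1 hp1) (hII Γ hΓI 1 hp1), hρ]
    ring
  -- the a.e. identity for Λd, rearranged
  have haeI : ∀ᵐ p ∂(volume.restrict (Icc (0:ℝ) 1)),
      Λd p = Ψdf p - c * (w (1-p) * deriv u (d - Γ p)) := by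
    filter_upwards [hae] with p hp
    rw [hp.2, hΨdf]; ring
  have hΨdI : IntegrableOn Ψdf (Icc (0:ℝ) 1) := hΨdC.integrableOn_Icc
  have hA_int : IntegrableOn (fun s => w (1-s) * deriv u (d - Γ s)) (Icc (0:ℝ) 1) := by
    refine ((hΨdI.sub hΛd_int).mul_const c⁻¹).congr ?_
    filter_upwards [haeI] with p hp
    simp only [Pi.sub_apply]
    rw [hp]
    field_simp
    ring
  have hkey : ∀ p ∈ Icc (0:ℝ) 1,
      Λ p = Ψ p - c * ∫ s in (0:ℝ)..p, w (1-s) * deriv u (d - Γ s) := by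
    intro p hp
    have haeI' : ∀ᵐ x ∂volume, x ∈ Icc (0:ℝ) 1 →
        Λd x = Ψdf x - c * (w (1-x) * deriv u (d - Γ x)) :=
      (ae_restrict_iff' measurableSet_Icc).mp haeI
    have e1 : ∫ t in (0:ℝ)..p, Λd t
        = ∫ t in (0:ℝ)..p, (Ψdf t - c * (w (1-t) * deriv u (d - Γ t))) := by
      apply intervalIntegral.integral_congr_ae
      filter_upwards [haeI'] with x hx hxI
      exact hx (hIoc_sub hp (by rwa [uIoc_of_le hp.1] at hxI))
    have e2 : ∫ t in (0:ℝ)..p, (Ψdf t - c * (w (1-t) * deriv u (d - Γ t)))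
        = (∫ t in (0:ℝ)..p, Ψdf t) - c * ∫ t in (0:ℝ)..p, w (1-t) * deriv u (d - Γ t) := by
      rw [intervalIntegral.integral_sub (hII _ hΨdI p hp) ((hII _ hA_int p hp).const_mul c),
        intervalIntegral.integral_const_mul]
    have e3 : ∫ t in (0:ℝ)..p, Ψdf t = Ψ p - (1 - θ) := by
      rw [hΨdf]
      simp only []
      rw [intervalIntegral.integral_add ((hII _ hqΓC.integrableOn_Icc p hp).const_mul (2*σ))
        intervalIntegrable_const, intervalIntegral.integral_const_mul,
        intervalIntegral.integral_const, hΨ]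
      simp only [smul_eq_mul]
      ring
    have := hΛrep p hp
    rw [e1, e2, e3, hΛ0] at this
    linarith
  have hA1 : ∫ s in (0:ℝ)..1, w (1-s) * deriv u (d - Γ s) = 1/c := by
    have := hkey 1 hp1
    rw [hΛ1, hΨ1] at this
    field_simp at this ⊢
    linarith
  -- conversion of μ-integrals to weighted Lebesgue integrals
  have hconv : ∀ (F : ℝ → ℝ) (p : ℝ), p ∈ Icc (0:ℝ) 1 →
      ∫ t in Ioc (1-p) 1, F t ∂μ = ∫ t in (1-p)..(1:ℝ), w t * F t := by
    intro F p hp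
    have hsub : Ioc (1-p) 1 ⊆ Icc (0:ℝ) 1 := fun x hx =>
      ⟨le_trans (by linarith [hp.2]) hx.1.le, hx.2⟩
    have h1 : μ.restrict (Ioc (1-p) 1)
        = (volume.restrict (Ioc (1-p) 1)).withDensity (fun t => ENNReal.ofReal (w t)) := by
      rw [hμw, restrict_withDensity measurableSet_Ioc,
        Measure.restrict_restrict measurableSet_Ioc, inter_eq_left.mpr hsub]
    rw [h1]
    rw [show (fun t => ENNReal.ofReal (w t)) = (fun t => ((Real.toNNReal (w t) : NNReal) : ENNReal))
      from rfl]
    rw [integral_withDensity_eq_integral_smul hw_meas.real_toNNReal]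
    rw [intervalIntegral.integral_of_le (by linarith [hp.1] : 1 - p ≤ 1)]
    apply integral_congr_ae
    filter_upwards [ae_restrict_of_ae_restrict_of_subset hsub hw_nonneg] with t ht
    rw [NNReal.smul_def, Real.coe_toNNReal _ ht, smul_eq_mul]
  have hnum : ∀ (F : ℝ → ℝ) (p : ℝ), p ∈ Icc (0:ℝ) 1 →
      ∫ t in Ioc (1-p) 1, F (1 - t) ∂μ = ∫ s in (0:ℝ)..p, w (1-s) * F s := by
    intro F p hp
    rw [hconv (fun t => F (1 - t)) p hp]
    have h2 := intervalIntegral.integral_comp_sub_left (a := 1-p) (b := 1)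
      (fun s => w (1-s) * F s) 1
    simp only [sub_sub_cancel, sub_self] at h2
    exact h2
  -- the denominator of Phi
  have hden : ∫ t in Icc (0:ℝ) 1, deriv u (d - Γ (1 - t)) ∂μ = 1/c := by
    rw [integral_Icc_eq_integral_Ioc' hμ0]
    have h2 := hnum (fun s => deriv u (d - Γ s)) 1 hp1
    simp only [sub_self] at h2
    rw [h2, hA1]
  have hnum' : ∀ p ∈ Icc (0:ℝ) 1,
      ∫ t in Ioc (1-p) 1, deriv u (d - Γ (1 - t)) ∂μ = (Ψ p - Λ p) / c := by
    intro p hp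
    rw [hnum (fun s => deriv u (d - Γ s)) p hp]
    have := hkey p hp
    field_simp
    linarith
  -- identification of the nonlocal operator
  have hPhiC : ∀ p ∈ Icc (0:ℝ) 1, PhiC σ θ k q u μ Ψdf p = Ψ p - Λ p := by
    intro p hp
    have hfun : (fun s => q s + (Ψdf 0 - Ψdf s) / (2*σ)) = Γ := by
      funext s
      rw [hΨd0, hΨdf]
      simp only []
      field_simp
      ring
    unfold PhiC Phi
    rw [hfun, hold, hnum' p hp, hden]
    field_simp
  -- the InG property of Γ
  have hΓdm := hΓd_int.aestronglyMeasurable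
  set gΓ : ℝ → ℝ := hΓdm.mk Γd with hgΓdef
  have hgΓ_meas : Measurable gΓ := hΓdm.stronglyMeasurable_mk.measurable
  have hgΓ_ae : Γd =ᵐ[volume.restrict (Icc (0:ℝ) 1)] gΓ := hΓdm.ae_eq_mk
  have hgΓ_bnd : ∀ᵐ t ∂(volume.restrict (Icc (0:ℝ) 1)), 0 ≤ gΓ t ∧ gΓ t ≤ h t := by
    filter_upwards [hae, hh_nonneg, hgΓ_ae] with t h1 h2 h3
    rw [← h3]
    exact aux_bounds h2 h1.1
  have hgΓ_rep : ∀ p ∈ Icc (0:ℝ) 1, Γ p = ∫ t in (0:ℝ)..p, gΓ t := by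
    intro p hp
    rw [← hΓint p hp]
    apply intervalIntegral.integral_congr_ae
    have h4 : ∀ᵐ x ∂volume, x ∈ Icc (0:ℝ) 1 → Γd x = gΓ x :=
      (ae_restrict_iff' measurableSet_Icc).mp hgΓ_ae
    filter_upwards [h4] with x hx hxI
    exact hx (hIoc_sub hp (by rwa [uIoc_of_le hp.1] at hxI))
  have hInG : InG h Γ := ⟨gΓ, hgΓ_meas, hgΓ_bnd, hgΓ_rep⟩
  refine ⟨⟨Ψdf, Ψddf, ⟨hΨderiv, hΨdd_int, hΨdd_rep⟩, hΨ0, hΨ1, ?_⟩, hInG, ?_⟩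
  · -- the OIDE
    filter_upwards [hae, ae_restrict_mem measurableSet_Icc] with p hp hpI
    rw [hPhiC p hpI]
    have e1 : -(Ψddf p) = 2*σ*(Γd p - h p) := by rw [hΨddf]; ring
    have e2 : 2*σ*h p - Ψddf p = 2*σ*(Γd p) := by rw [hΨddf]; ring
    have e3 : Ψ p - (Ψ p - Λ p) = Λ p := by ring
    rw [e1, e2, e3]
    exact aux_minmax hσ hp.1
  -- optimality
  intro G hG
  obtain ⟨g, hg_meas, hg_bnd, hGrep⟩ := hG
  have hg_int : IntegrableOn g (Icc (0:ℝ) 1) := by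
    refine hh_int.mono' hg_meas.aestronglyMeasurable ?_
    filter_upwards [hg_bnd] with t ht
    rw [Real.norm_eq_abs, abs_of_nonneg ht.1]
    exact ht.2
  have hGC : ContinuousOn G (Icc (0:ℝ) 1) := by
    have h1 : ContinuousOn (fun x => ∫ t in (0:ℝ)..x, g t) (Icc 0 1) := by
      have := intervalIntegral.continuousOn_primitive_interval (a := 0) (b := 1)
        (μ := volume) (f := g) (by rwa [huIcc])
      rwa [huIcc] at this
    exact h1.congr hGrep
  have hGI : IntegrableOn G (Icc (0:ℝ) 1) := hGC.integrableOn_Icc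
  -- a bound for `deriv u` on the relevant range
  have hIc : IsCompact (Icc (0:ℝ) 1) := isCompact_Icc
  have hIne : (Icc (0:ℝ) 1).Nonempty := ⟨0, hp0⟩
  have hYC : ContinuousOn (fun s => d - Γ s) (Icc (0:ℝ) 1) := continuousOn_const.sub hΓC
  obtain ⟨slo, hslo_mem, hslo⟩ := hIc.exists_isMinOn hIne hYC
  obtain ⟨shi, hshi_mem, hshi⟩ := hIc.exists_isMaxOn hIne hYC
  have hanti : Antitone (deriv u) := by
    have := hu_conc.antitoneOn_deriv (fun x _ => hu_diff x)
    rwa [antitoneOn_univ] at this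
  set M : ℝ := max |deriv u (d - Γ slo)| |deriv u (d - Γ shi)| with hM
  have hbnd : ∀ s ∈ Icc (0:ℝ) 1, |deriv u (d - Γ s)| ≤ M := by
    intro s hs
    have h1 : deriv u (d - Γ s) ≤ deriv u (d - Γ slo) := hanti (hslo hs)
    have h2 : deriv u (d - Γ shi) ≤ deriv u (d - Γ s) := hanti (hshi hs)
    rw [abs_le]
    constructor
    · calc -M ≤ -|deriv u (d - Γ shi)| := neg_le_neg (le_max_right _ _)
        _ ≤ deriv u (d - Γ shi) := neg_abs_le _
        _ ≤ _ := h2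
    · exact h1.trans ((le_abs_self _).trans (le_max_left _ _))
  have hmaps : MapsTo (fun p : ℝ => 1 - p) (Icc (0:ℝ) 1) (Icc (0:ℝ) 1) := by
    intro x hx
    simp only [mem_Icc] at hx ⊢
    constructor <;> linarith [hx.1, hx.2]
  have h1mC : ContinuousOn (fun p : ℝ => 1 - p) (Icc (0:ℝ) 1) :=
    (continuous_const.sub continuous_id).continuousOn
  have hupm : AEStronglyMeasurable (fun p => deriv u (d - Γ (1-p))) (μ.restrict (Icc (0:ℝ) 1)) := by
    have hY : AEMeasurable (fun p => d - Γ (1-p)) (μ.restrict (Icc (0:ℝ) 1)) :=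
      (hYC.comp h1mC hmaps).aemeasurable measurableSet_Icc
    exact ((measurable_deriv u).comp_aemeasurable hY).aestronglyMeasurable
  have hup_int : IntegrableOn (fun p => deriv u (d - Γ (1-p))) (Icc (0:ℝ) 1) μ := by
    refine Integrable.mono' (integrable_const M) hupm ?_
    refine (ae_restrict_iff' measurableSet_Icc).mpr (ae_of_all _ fun p hp => ?_)
    rw [Real.norm_eq_abs]
    exact hbnd _ (hmaps hp)
  -- continuity and integrability of the J-integrands
  have hJG_C : ContinuousOn (fun p => u (ol σ θ k q G - G (1-p))) (Icc (0:ℝ) 1) :=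
    hu_diff.continuous.comp_continuousOn (continuousOn_const.sub (hGC.comp h1mC hmaps))
  have hJΓ_C : ContinuousOn (fun p => u (d - Γ (1-p))) (Icc (0:ℝ) 1) :=
    hu_diff.continuous.comp_continuousOn (continuousOn_const.sub (hΓC.comp h1mC hmaps))
  have hJG_int : IntegrableOn (fun p => u (ol σ θ k q G - G (1-p))) (Icc (0:ℝ) 1) μ :=
    hJG_C.integrableOn_compact hIc
  have hJΓ_int : IntegrableOn (fun p => u (d - Γ (1-p))) (Icc (0:ℝ) 1) μ :=
    hJΓ_C.integrableOn_compact hIc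
  -- the linearization term
  set φ : ℝ → ℝ := fun p => (ol σ θ k q G - G (1-p)) - (d - Γ (1-p)) with hφ
  have hφC : ContinuousOn φ (Icc (0:ℝ) 1) :=
    (continuousOn_const.sub (hGC.comp h1mC hmaps)).sub
      (continuousOn_const.sub (hΓC.comp h1mC hmaps))
  obtain ⟨Cφ, hCφ⟩ := hIc.exists_bound_of_continuousOn hφC
  have hprod_int : IntegrableOn (fun p => deriv u (d - Γ (1-p)) * φ p) (Icc (0:ℝ) 1) μ := by
    refine Integrable.mono' (integrable_const (M * Cφ))
      (hupm.mul ((hφC.aemeasurable measurableSet_Icc).aestronglyMeasurable)) ?_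
    refine (ae_restrict_iff' measurableSet_Icc).mpr (ae_of_all _ fun p hp => ?_)
    rw [Real.norm_eq_abs, abs_mul]
    have h1 := hbnd _ (hmaps hp)
    have h2 := hCφ p hp
    rw [Real.norm_eq_abs] at h2
    exact mul_le_mul h1 h2 (abs_nonneg _) ((abs_nonneg _).trans h1)
  have hGmΓ_C : ContinuousOn (fun p => G (1-p) - Γ (1-p)) (Icc (0:ℝ) 1) :=
    (hGC.comp h1mC hmaps).sub (hΓC.comp h1mC hmaps)
  obtain ⟨C2, hC2⟩ := hIc.exists_bound_of_continuousOn hGmΓ_C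
  have hprod2_int : IntegrableOn (fun p => deriv u (d - Γ (1-p)) * (G (1-p) - Γ (1-p)))
      (Icc (0:ℝ) 1) μ := by
    refine Integrable.mono' (integrable_const (M * C2))
      (hupm.mul ((hGmΓ_C.aemeasurable measurableSet_Icc).aestronglyMeasurable)) ?_
    refine (ae_restrict_iff' measurableSet_Icc).mpr (ae_of_all _ fun p hp => ?_)
    rw [Real.norm_eq_abs, abs_mul]
    have h1 := hbnd _ (hmaps hp)
    have h2 := hC2 p hp
    rw [Real.norm_eq_abs] at h2
    exact mul_le_mul h1 h2 (abs_nonneg _) ((abs_nonneg _).trans h1)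
  -- step 1: tangent-line bound
  have hstep1 : J σ θ k q u μ G ≤ J σ θ k q u μ Γ
      + ∫ p in Icc (0:ℝ) 1, deriv u (d - Γ (1-p)) * φ p ∂μ := by
    have hJΓ : J σ θ k q u μ Γ = ∫ p in Icc (0:ℝ) 1, u (d - Γ (1-p)) ∂μ := by
      unfold J
      rw [hold]
    rw [hJΓ, ← integral_add hJΓ_int hprod_int]
    refine setIntegral_mono_on hJG_int (hJΓ_int.add hprod_int) measurableSet_Icc ?_
    intro p hp
    have := concave_tangent hu_conc hu_diff (d - Γ (1-p)) (ol σ θ k q G - G (1-p))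
    simpa [hφ] using this
  -- step 2: split the linearization term
  have hsplit : ∫ p in Icc (0:ℝ) 1, deriv u (d - Γ (1-p)) * φ p ∂μ
      = (ol σ θ k q G - d) * (1/c)
        - ∫ p in Icc (0:ℝ) 1, deriv u (d - Γ (1-p)) * (G (1-p) - Γ (1-p)) ∂μ := by
    have e : (fun p => deriv u (d - Γ (1-p)) * φ p)
        = fun p => (ol σ θ k q G - d) * deriv u (d - Γ (1-p))
            - deriv u (d - Γ (1-p)) * (G (1-p) - Γ (1-p)) := by
      funext p
      rw [hφ]
      ring
    rw [e, integral_sub (hup_int.const_mul _) hprod2_int, integral_const_mul, hden]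
  -- step 3: substitution p ↦ 1 - p in the second μ-integral
  have hstep2 : ∫ p in Icc (0:ℝ) 1, deriv u (d - Γ (1-p)) * (G (1-p) - Γ (1-p)) ∂μ
      = ∫ s in (0:ℝ)..1, w (1-s) * (deriv u (d - Γ s) * (G s - Γ s)) := by
    rw [integral_Icc_eq_integral_Ioc' hμ0]
    have h2 := hnum (fun s => deriv u (d - Γ s) * (G s - Γ s)) 1 hp1
    simp only [sub_self] at h2
    exact h2
  -- step 4: the quadratic inequality for ol
  have hDC : ContinuousOn (fun t => G t - Γ t) (Icc (0:ℝ) 1) := hGC.sub hΓC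
  have iD := hII _ hDC.integrableOn_Icc 1 hp1
  have iD2 := hII _ (hDC.pow 2).integrableOn_Icc 1 hp1
  have iΓD := hII _ (hΓC.mul hDC).integrableOn_Icc 1 hp1
  have iqD := hII _ (hqC.mul hDC).integrableOn_Icc 1 hp1
  have iΓ := hII _ hΓI 1 hp1
  have iq := hII _ hqI 1 hp1
  have iG := hII _ hGI 1 hp1
  have iΓ2 := hII _ (hΓC.pow 2).integrableOn_Icc 1 hp1
  have iqΓ := hII _ (hqC.mul hΓC).integrableOn_Icc 1 hp1
  set m : ℝ := ∫ t in (0:ℝ)..1, (G t - Γ t) with hm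
  have hCS : m^2 ≤ ∫ t in (0:ℝ)..1, (G t - Γ t)^2 := by
    have h0 : (0:ℝ) ≤ ∫ t in (0:ℝ)..1, ((G t - Γ t) - m)^2 :=
      intervalIntegral.integral_nonneg h01 (fun t _ => sq_nonneg _)
    have e : (fun t => ((G t - Γ t) - m)^2)
        = fun t => ((G t - Γ t)^2 - (2*m)*(G t - Γ t)) + m^2 := by
      funext t
      ring
    rw [e] at h0
    rw [intervalIntegral.integral_add (f := fun t => (G t - Γ t)^2 - (2*m)*(G t - Γ t))
        (iD2.sub (iD.const_mul (2*m))) intervalIntegrable_const,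
      intervalIntegral.integral_sub (f := fun t => (G t - Γ t)^2) (g := fun t => (2*m)*(G t - Γ t))
        iD2 (iD.const_mul (2*m)),
      intervalIntegral.integral_const_mul, intervalIntegral.integral_const, ← hm] at h0
    simp only [smul_eq_mul, sub_zero] at h0
    nlinarith [h0]
  have e1 : ∫ t in (0:ℝ)..1, G t = (∫ t in (0:ℝ)..1, Γ t) + m := by
    rw [hm, intervalIntegral.integral_sub iG iΓ]
    ring
  have e2 : ∫ t in (0:ℝ)..1, G t ^ 2
      = ((∫ t in (0:ℝ)..1, Γ t ^ 2) + (∫ t in (0:ℝ)..1, (G t - Γ t)^2))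
        + 2 * ∫ t in (0:ℝ)..1, Γ t * (G t - Γ t) := by
    have e : (fun t => G t ^ 2)
        = fun t => ((Γ t ^ 2 + (G t - Γ t)^2) + 2*(Γ t * (G t - Γ t))) := by
      funext t
      ring
    rw [e, intervalIntegral.integral_add (f := fun t => Γ t ^ 2 + (G t - Γ t)^2)
        (g := fun t => 2*(Γ t * (G t - Γ t))) (iΓ2.add iD2) (iΓD.const_mul 2),
      intervalIntegral.integral_add (f := fun t => Γ t ^ 2) (g := fun t => (G t - Γ t)^2) iΓ2 iD2,
      intervalIntegral.integral_const_mul]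
  have e3 : ∫ t in (0:ℝ)..1, q t * G t
      = (∫ t in (0:ℝ)..1, q t * Γ t) + ∫ t in (0:ℝ)..1, q t * (G t - Γ t) := by
    have e : (fun t => q t * G t) = fun t => q t * Γ t + q t * (G t - Γ t) := by
      funext t
      ring
    rw [e, intervalIntegral.integral_add (f := fun t => q t * Γ t) (g := fun t => q t * (G t - Γ t)) iqΓ iqD]
  have eR : ∫ t in (0:ℝ)..1, Ψdf t * (G t - Γ t)
      = ((2*σ)*(∫ t in (0:ℝ)..1, q t * (G t - Γ t))
          - (2*σ)*(∫ t in (0:ℝ)..1, Γ t * (G t - Γ t))) + ρ * m := by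
    have e : (fun t => Ψdf t * (G t - Γ t))
        = fun t => ((2*σ)*(q t * (G t - Γ t)) - (2*σ)*(Γ t * (G t - Γ t))) + ρ*(G t - Γ t) := by
      funext t
      rw [hΨdf]
      ring
    rw [e, intervalIntegral.integral_add
        (f := fun t => (2*σ)*(q t * (G t - Γ t)) - (2*σ)*(Γ t * (G t - Γ t)))
        (g := fun t => ρ*(G t - Γ t)) ((iqD.const_mul _).sub (iΓD.const_mul _)) (iD.const_mul _),
      intervalIntegral.integral_sub (f := fun t => (2*σ)*(q t * (G t - Γ t)))
        (g := fun t => (2*σ)*(Γ t * (G t - Γ t))) (iqD.const_mul _) (iΓD.const_mul _),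
      intervalIntegral.integral_const_mul, intervalIntegral.integral_const_mul,
      intervalIntegral.integral_const_mul, ← hm]
  have holineq : ol σ θ k q G - ol σ θ k q Γ ≤ ∫ t in (0:ℝ)..1, Ψdf t * (G t - Γ t) := by
    have hkey2 : ol σ θ k q G - ol σ θ k q Γ - (∫ t in (0:ℝ)..1, Ψdf t * (G t - Γ t))
        = σ * (m^2 - ∫ t in (0:ℝ)..1, (G t - Γ t)^2) := by
      unfold ol
      rw [e1, e2, e3, eR, hρ]
      ring
    have hX := mul_nonneg hσ.le (sub_nonneg.mpr hCS)
    have hY : σ * (m^2 - ∫ t in (0:ℝ)..1, (G t - Γ t)^2)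
        = -(σ * ((∫ t in (0:ℝ)..1, (G t - Γ t)^2) - m^2)) := by ring
    linarith
  -- step 5: rewrite the weighted integral via Λd
  obtain ⟨CD, hCD⟩ := hIc.exists_bound_of_continuousOn hDC
  have hΛdD_int : IntegrableOn (fun s => Λd s * (G s - Γ s)) (Icc (0:ℝ) 1) := by
    refine Integrable.mono' (hΛd_int.abs.mul_const CD)
      (hΛd_int.aestronglyMeasurable.mul (hDC.aestronglyMeasurable measurableSet_Icc)) ?_
    refine (ae_restrict_iff' measurableSet_Icc).mpr (ae_of_all _ fun s hs => ?_)
    rw [Real.norm_eq_abs, abs_mul]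
    have h2 := hCD s hs
    rw [Real.norm_eq_abs] at h2
    exact mul_le_mul_of_nonneg_left h2 (abs_nonneg _)
  have hAD : ∫ s in (0:ℝ)..1, w (1-s) * (deriv u (d - Γ s) * (G s - Γ s))
      = (1/c) * ((∫ s in (0:ℝ)..1, Ψdf s * (G s - Γ s))
          - ∫ s in (0:ℝ)..1, Λd s * (G s - Γ s)) := by
    rw [← intervalIntegral.integral_sub (f := fun s => Ψdf s * (G s - Γ s))
      (hII _ (hΨdC.mul hDC).integrableOn_Icc 1 hp1)
      (hII _ hΛdD_int 1 hp1), ← intervalIntegral.integral_const_mul]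
    apply intervalIntegral.integral_congr_ae
    have h4 : ∀ᵐ x ∂volume, x ∈ Icc (0:ℝ) 1 →
        Λd x = Ψdf x - c * (w (1-x) * deriv u (d - Γ x)) :=
      (ae_restrict_iff' measurableSet_Icc).mp haeI
    filter_upwards [h4] with x hx hxI
    have hx' := hx (hIoc_sub hp1 (by rwa [uIoc_of_le h01] at hxI))
    rw [hx']
    field_simp
    ring
  -- step 6: integration by parts via Fubini
  have hΛdm := hΛd_int.aestronglyMeasurable
  set ΛdM : ℝ → ℝ := hΛdm.mk Λd with hΛdMdef
  have hΛdM_meas : Measurable ΛdM := hΛdm.stronglyMeasurable_mk.measurable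
  have hΛdM_ae : Λd =ᵐ[volume.restrict (Icc (0:ℝ) 1)] ΛdM := hΛdm.ae_eq_mk
  have hΛdM_int : IntegrableOn ΛdM (Icc (0:ℝ) 1) := hΛd_int.congr hΛdM_ae
  set E : ℝ → ℝ := fun t => g t - gΓ t with hE
  have hE_meas : Measurable E := hg_meas.sub hgΓ_meas
  have hgΓ_int : IntegrableOn gΓ (Icc (0:ℝ) 1) := hΓd_int.congr hgΓ_ae
  have hE_int : IntegrableOn E (Icc (0:ℝ) 1) := hg_int.sub hgΓ_int
  set S : Set (ℝ × ℝ) := {z : ℝ × ℝ | z.2 ≤ z.1} with hS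
  have hS_meas : MeasurableSet S := (isClosed_le continuous_snd continuous_fst).measurableSet
  set F : ℝ × ℝ → ℝ := S.indicator (fun z => ΛdM z.1 * E z.2) with hF
  have hF_int : Integrable F
      ((volume.restrict (Ioc (0:ℝ) 1)).prod (volume.restrict (Ioc (0:ℝ) 1))) := by
    refine Integrable.indicator ?_ hS_meas
    exact Integrable.mul_prod (hΛdM_int.mono_set Ioc_subset_Icc_self)
      (hE_int.mono_set Ioc_subset_Icc_self)
  have hswap := integral_integral_swap (f := fun p t => F (p, t)) hF_int
  have hDint : ∀ p ∈ Ioc (0:ℝ) 1, (∫ t in Ioc (0:ℝ) 1, F (p, t)) = ΛdM p * (G p - Γ p) := by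
    intro p hp
    have hpI : p ∈ Icc (0:ℝ) 1 := ⟨hp.1.le, hp.2⟩
    have e : (fun t => F (p, t)) = (Iic p).indicator (fun t => ΛdM p * E t) := by
      funext t
      rw [hF]
      simp only [indicator_apply, hS, mem_setOf_eq, mem_Iic]
    have hset : Iic p ∩ Ioc (0:ℝ) 1 = Ioc 0 p := by
      ext x
      simp only [mem_inter_iff, mem_Iic, mem_Ioc]
      constructor
      · rintro ⟨h1, h2, h3⟩
        exact ⟨h2, h1⟩
      · rintro ⟨h1, h2⟩
        exact ⟨h2, h1, h2.trans hp.2⟩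
    rw [e, integral_indicator measurableSet_Iic, Measure.restrict_restrict measurableSet_Iic,
      hset, integral_const_mul]
    have h5 : ∫ t in Ioc (0:ℝ) p, E t = G p - Γ p := by
      rw [← intervalIntegral.integral_of_le hp.1.le]
      rw [hE]
      simp only []
      rw [intervalIntegral.integral_sub (hII g hg_int p hpI) (hII gΓ hgΓ_int p hpI),
        ← hGrep p hpI, ← hgΓ_rep p hpI]
    rw [h5]
  have hLHS : (∫ p in Ioc (0:ℝ) 1, (∫ t in Ioc (0:ℝ) 1, F (p, t)))
      = ∫ s in (0:ℝ)..1, Λd s * (G s - Γ s) := by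
    rw [intervalIntegral.integral_of_le h01]
    apply integral_congr_ae
    have hae2 : ∀ᵐ p ∂(volume.restrict (Ioc (0:ℝ) 1)), Λd p = ΛdM p :=
      ae_restrict_of_ae_restrict_of_subset Ioc_subset_Icc_self hΛdM_ae
    filter_upwards [hae2, ae_restrict_mem measurableSet_Ioc] with p h1 h2
    rw [hDint p h2, ← h1]
  have hΛiv : ∀ t ∈ Ioc (0:ℝ) 1, (∫ p in Ioc (0:ℝ) 1, F (p, t)) = -(Λ t) * E t := by
    intro t ht
    have htI : t ∈ Icc (0:ℝ) 1 := ⟨ht.1.le, ht.2⟩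
    have e : (fun p => F (p, t)) = (Ici t).indicator (fun p => ΛdM p * E t) := by
      funext p
      rw [hF]
      simp only [indicator_apply, hS, mem_setOf_eq, mem_Ici]
    have hset : Ici t ∩ Ioc (0:ℝ) 1 = Icc t 1 := by
      ext x
      simp only [mem_inter_iff, mem_Ici, mem_Ioc, mem_Icc]
      constructor
      · rintro ⟨h1, _, h3⟩
        exact ⟨h1, h3⟩
      · rintro ⟨h1, h2⟩
        exact ⟨h1, lt_of_lt_of_le ht.1 h1, h2⟩
    rw [e, integral_indicator measurableSet_Ici, Measure.restrict_restrict measurableSet_Ici,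
      hset, integral_mul_const, integral_Icc_eq_integral_Ioc]
    have hsub2 : Ioc t 1 ⊆ Icc (0:ℝ) 1 := fun x hx => ⟨le_trans ht.1.le hx.1.le, hx.2⟩
    have econ : ∫ p in Ioc t 1, ΛdM p = ∫ p in Ioc t 1, Λd p := by
      have h9 : Λd =ᵐ[volume.restrict (Ioc t 1)] ΛdM :=
        ae_restrict_of_ae_restrict_of_subset hsub2 hΛdM_ae
      exact integral_congr_ae h9.symm
    rw [econ, ← intervalIntegral.integral_of_le ht.2]
    have h5 := intervalIntegral.integral_interval_sub_left (hII Λd hΛd_int 1 hp1)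
      (hII Λd hΛd_int t htI)
    have h6 : ∫ p in (0:ℝ)..1, Λd p = Λ 1 - Λ 0 := by
      have := hΛrep 1 hp1
      linarith
    have h7 : ∫ p in (0:ℝ)..t, Λd p = Λ t - Λ 0 := by
      have := hΛrep t htI
      linarith
    rw [← h5, h6, h7, hΛ1]
    ring
  have hfinal : ∫ s in (0:ℝ)..1, Λd s * (G s - Γ s) ≤ 0 := by
    have hRHS : (∫ t in Ioc (0:ℝ) 1, (∫ p in Ioc (0:ℝ) 1, F (p, t)))
        = ∫ t in Ioc (0:ℝ) 1, -(Λ t) * E t :=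
      setIntegral_congr_fun measurableSet_Ioc hΛiv
    have hsign : 0 ≤ ∫ t in Ioc (0:ℝ) 1, Λ t * E t := by
      apply integral_nonneg_of_ae
      have b1 : ∀ᵐ t ∂(volume.restrict (Ioc (0:ℝ) 1)),
          min (max (Γd t - h t) (Λ t)) (Γd t) = 0 ∧ _ :=
        ae_restrict_of_ae_restrict_of_subset Ioc_subset_Icc_self hae
      have b2 : ∀ᵐ t ∂(volume.restrict (Ioc (0:ℝ) 1)), Γd t = gΓ t :=
        ae_restrict_of_ae_restrict_of_subset Ioc_subset_Icc_self hgΓ_ae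
      have b3 : ∀ᵐ t ∂(volume.restrict (Ioc (0:ℝ) 1)), 0 ≤ g t ∧ g t ≤ h t :=
        ae_restrict_of_ae_restrict_of_subset Ioc_subset_Icc_self hg_bnd
      have b4 : ∀ᵐ t ∂(volume.restrict (Ioc (0:ℝ) 1)), 0 ≤ h t :=
        ae_restrict_of_ae_restrict_of_subset Ioc_subset_Icc_self hh_nonneg
      filter_upwards [b1, b2, b3, b4] with t h1 h2 h3 h4
      have hmin := h1.1
      rw [h2] at hmin
      have := aux_sign h4 h3.1 h3.2 hmin
      simpa [hE] using this
    calc ∫ s in (0:ℝ)..1, Λd s * (G s - Γ s)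
        = ∫ t in Ioc (0:ℝ) 1, -(Λ t) * E t := by rw [← hLHS, hswap, hRHS]
      _ = -∫ t in Ioc (0:ℝ) 1, Λ t * E t := by
          rw [← integral_neg]
          apply integral_congr_ae
          filter_upwards with t
          ring
      _ ≤ 0 := neg_nonpos_of_nonneg hsign
  -- conclusion
  rw [hsplit, hstep2, hAD] at hstep1
  have holΓ : ol σ θ k q Γ = d := hold
  have hc' : 0 < 1/c := by positivity
  nlinarith [mul_nonneg hc'.le (sub_nonneg.mpr holineq),
    mul_nonneg hc'.le (neg_nonneg.mpr hfinal), hstep1, holΓ]
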